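/- arXiv:1407.4053 — 6 statements merged into one kernel-verified Lean document; each statement's English description precedes it below -/
import Mathlib

section
/- Let Γ = A ∗ B be a free product and let f_A, f_B be alternating quasimorphisms on A and B respectively. Then the split quasimorphism f = f_A ∗ f_B defined by summing the values of f_A and f_B on the syllables of the normal form is an alternating quasimorphism on Γ whose defect equals max{D(f_A), D(f_B)}. -/
/-- The value of a split quasimorphism `f_A ∗ f_B` on an element of the free product
`A ∗ B` (here the binary free product is realized as `Monoid.CoprodI G` over `Bool`,
with `A = G true`, `B = G false`): it is the sum of the values of the `f b`'s on the
syllables of the normal form. -/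
noncomputable def splitQM {G : Bool → Type*} [∀ b, Group (G b)]
    (f : ∀ b, G b → ℝ) (g : Monoid.CoprodI G) : ℝ := by
  classical
  exact ((Monoid.CoprodI.Word.equiv g).toList.map fun l => f l.1 l.2).sum

/-- The defect of a real-valued function on a group. -/
noncomputable def defect {G : Type*} [Group G] (f : G → ℝ) : ℝ :=
  ⨆ p : G × G, |f (p.1 * p.2) - f p.1 - f p.2|

/-!
Multiplying two normal forms, syllables interact only at the junction: the last syllable `x` of
`g` and the first syllable `y` of `h` either lie in different factors (the normal form of `g * h`
is the concatenation, no error), or merge into one nontrivial syllable `x * y` (the error is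
that of `f_A` or `f_B` at `(x, y)`), or cancel; in the last case alternation makes
`f x + f y = 0` and the argument continues with the next pair. Hence
`D(f_A ∗ f_B) ≤ max D(f_A) D(f_B)`, and the reverse inequality holds because `f_A ∗ f_B`
restricts to `f_A` and `f_B` on the factors. The normal form of `g⁻¹` is the reversed list of
inverted syllables, which gives alternation.
-/

def IsQuasimorphism {G : Type*} [Group G] (f : G → ℝ) : Prop :=
  ∃ C : ℝ, ∀ x y : G, |f (x * y) - f x - f y| ≤ C

section Defect

variable {G : Type*} [Group G] {f : G → ℝ}

lemma IsQuasimorphism.bddAbove (hf : IsQuasimorphism f) :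
    BddAbove (Set.range fun p : G × G => |f (p.1 * p.2) - f p.1 - f p.2|) := by
  obtain ⟨C, hC⟩ := hf
  exact ⟨C, by rintro _ ⟨p, rfl⟩; exact hC p.1 p.2⟩

lemma IsQuasimorphism.abs_sub_le_defect (hf : IsQuasimorphism f) (x y : G) :
    |f (x * y) - f x - f y| ≤ defect f :=
  le_ciSup hf.bddAbove (x, y)

lemma defect_nonneg : 0 ≤ defect f :=
  Real.iSup_nonneg fun _ => abs_nonneg _

lemma defect_le {C : ℝ} (hC : ∀ x y : G, |f (x * y) - f x - f y| ≤ C) : defect f ≤ C :=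
  ciSup_le fun p => hC p.1 p.2

lemma IsQuasimorphism.defect_comp_le {H : Type*} [Group H] (hf : IsQuasimorphism f)
    (φ : H →* G) : defect (f ∘ φ) ≤ defect f :=
  defect_le fun x y => by
    simpa only [Function.comp_apply, map_mul] using hf.abs_sub_le_defect (φ x) (φ y)

end Defect

namespace Monoid.CoprodI

variable {ι : Type*} {G : ι → Type*}

def syllableSum (f : ∀ i, G i → ℝ) (L : List (Σ i, G i)) : ℝ :=
  (L.map fun l => f l.1 l.2).sum

@[simp]
lemma syllableSum_nil (f : ∀ i, G i → ℝ) : syllableSum f [] = 0 := rfl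

@[simp]
lemma syllableSum_cons (f : ∀ i, G i → ℝ) (a : Σ i, G i) (L : List (Σ i, G i)) :
    syllableSum f (a :: L) = f a.1 a.2 + syllableSum f L := List.sum_cons

@[simp]
lemma syllableSum_append (f : ∀ i, G i → ℝ) (P Q : List (Σ i, G i)) :
    syllableSum f (P ++ Q) = syllableSum f P + syllableSum f Q := by
  simp [syllableSum]

section Monoid

variable [∀ i, Monoid (G i)]

-- The conditions defining `Word`, with adjacency read off the list of indices, so that they are
-- preserved when a syllable is replaced by another nontrivial one from the same factor.
def IsReduced (L : List (Σ i, G i)) : Prop :=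
  (∀ l ∈ L, l.2 ≠ 1) ∧ (L.map Sigma.fst).IsChain (· ≠ ·)

def listProd (L : List (Σ i, G i)) : CoprodI G :=
  (L.map fun l => of l.2).prod

@[simp]
lemma listProd_nil : listProd ([] : List (Σ i, G i)) = 1 := rfl

@[simp]
lemma listProd_cons (a : Σ i, G i) (L : List (Σ i, G i)) :
    listProd (a :: L) = of a.2 * listProd L := List.prod_cons

@[simp]
lemma listProd_append (P Q : List (Σ i, G i)) :
    listProd (P ++ Q) = listProd P * listProd Q := by
  simp [listProd]

lemma Word.isReduced (w : Word G) : IsReduced w.toList :=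
  ⟨w.ne_one, (List.isChain_map _).2 w.chain_ne⟩

lemma IsReduced.left_of_append {P Q : List (Σ i, G i)} (h : IsReduced (P ++ Q)) :
    IsReduced P := by
  obtain ⟨h₁, h₂⟩ := h
  rw [List.map_append] at h₂
  exact ⟨fun l hl => h₁ l (List.mem_append_left Q hl), h₂.left_of_append⟩

lemma IsReduced.right_of_append {P Q : List (Σ i, G i)} (h : IsReduced (P ++ Q)) :
    IsReduced Q := by
  obtain ⟨h₁, h₂⟩ := h
  rw [List.map_append] at h₂
  exact ⟨fun l hl => h₁ l (List.mem_append_right P hl), h₂.right_of_append⟩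

lemma IsReduced.append {P Q : List (Σ i, G i)} (hP : IsReduced P) (hQ : IsReduced Q)
    (hPQ : ∀ a ∈ P.getLast?, ∀ b ∈ Q.head?, a.1 ≠ b.1) : IsReduced (P ++ Q) := by
  refine ⟨fun l hl => (List.mem_append.1 hl).elim (hP.1 l) (hQ.1 l), ?_⟩
  rw [List.map_append]
  refine hP.2.append hQ.2 ?_
  simp only [List.getLast?_map, List.head?_map, Option.mem_map]
  rintro _ ⟨a, ha, rfl⟩ _ ⟨b, hb, rfl⟩
  exact hPQ a ha b hb

lemma IsReduced.append_cons {P Q : List (Σ i, G i)} {i : ι} {x y z : G i}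
    (hP : IsReduced (P ++ [⟨i, x⟩])) (hQ : IsReduced (⟨i, y⟩ :: Q)) (hz : z ≠ 1) :
    IsReduced (P ++ ⟨i, z⟩ :: Q) := by
  refine ⟨?_, ?_⟩
  · simp only [List.mem_append, List.mem_cons]
    rintro l (hl | rfl | hl)
    exacts [hP.1 l (by simp [hl]), hz, hQ.1 l (by simp [hl])]
  · have hP₂ := hP.2
    have hQ₂ := hQ.2
    simp only [List.map_append, List.map_cons, List.map_nil] at hP₂ hQ₂ ⊢
    exact List.isChain_split.2 ⟨hP₂, hQ₂⟩

variable [DecidableEq ι] [∀ i, DecidableEq (G i)]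

lemma IsReduced.equiv_listProd {L : List (Σ i, G i)} (hL : IsReduced L) :
    (Word.equiv (listProd L)).toList = L :=
  congrArg Word.toList (Word.equiv.apply_symm_apply ⟨L, hL.1, (List.isChain_map _).1 hL.2⟩)

lemma listProd_equiv (g : CoprodI G) : listProd (Word.equiv g).toList = g :=
  Word.equiv.symm_apply_apply g

def splitSum (f : ∀ i, G i → ℝ) (g : CoprodI G) : ℝ :=
  syllableSum f (Word.equiv g).toList

lemma splitSum_of {f : ∀ i, G i → ℝ} {i : ι} (hf : f i 1 = 0) (x : G i) :
    splitSum f (of x) = f i x := by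
  by_cases hx : x = 1
  · have hnil : IsReduced ([] : List (Σ i, G i)) := ⟨by simp, .nil⟩
    simpa [splitSum, hx, hf] using congrArg (syllableSum f) hnil.equiv_listProd
  · have hsingle : IsReduced [(⟨i, x⟩ : Σ i, G i)] := ⟨by simpa using hx, by simp⟩
    simpa [splitSum] using congrArg (syllableSum f) hsingle.equiv_listProd

end Monoid

section Group

variable [∀ i, Group (G i)]

def invRev (L : List (Σ i, G i)) : List (Σ i, G i) :=
  (L.map fun l => ⟨l.1, l.2⁻¹⟩).reverse

lemma IsReduced.invRev {L : List (Σ i, G i)} (hL : IsReduced L) : IsReduced (invRev L) := by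
  refine ⟨fun l hl => ?_, ?_⟩
  · obtain ⟨a, ha, rfl⟩ := List.mem_map.1 (List.mem_reverse.1 hl)
    simpa using hL.1 a ha
  simpa [CoprodI.invRev, List.map_reverse, List.isChain_reverse, Function.comp_def, ne_comm]
    using hL.2

lemma listProd_invRev (L : List (Σ i, G i)) : listProd (invRev L) = (listProd L)⁻¹ := by
  simp [listProd, invRev, List.prod_inv_reverse, List.map_reverse, Function.comp_def]

lemma syllableSum_invRev {f : ∀ i, G i → ℝ} (hf : ∀ i x, f i x⁻¹ = -f i x)
    (L : List (Σ i, G i)) : syllableSum f (invRev L) = -syllableSum f L := by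
  simp [syllableSum, invRev, List.map_reverse, Function.comp_def, hf, List.sum_neg]

variable [DecidableEq ι] [∀ i, DecidableEq (G i)]

lemma splitSum_inv {f : ∀ i, G i → ℝ} (hf : ∀ i x, f i x⁻¹ = -f i x) (g : CoprodI G) :
    splitSum f g⁻¹ = -splitSum f g := by
  have hword : (Word.equiv g⁻¹).toList = invRev (Word.equiv g).toList := by
    rw [← (Word.isReduced _).invRev.equiv_listProd, listProd_invRev, listProd_equiv]
  rw [splitSum, hword, syllableSum_invRev hf, splitSum]

theorem abs_syllableSum_listProd_mul_sub_le {f : ∀ i, G i → ℝ} {D : ℝ} (hD₀ : 0 ≤ D)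
    (hD : ∀ i (x y : G i), |f i (x * y) - f i x - f i y| ≤ D) (hf : ∀ i x, f i x⁻¹ = -f i x)
    {P Q : List (Σ i, G i)} (hP : IsReduced P) (hQ : IsReduced Q) :
    |syllableSum f (Word.equiv (listProd P * listProd Q)).toList - syllableSum f P
      - syllableSum f Q| ≤ D := by
  induction P using List.reverseRecOn generalizing Q with
  | nil => simpa [hQ.equiv_listProd] using hD₀
  | append_singleton P x ih =>
    obtain ⟨i, x⟩ := x
    cases Q with
    | nil => simpa [← listProd_append, hP.equiv_listProd] using hD₀
    | cons y Q =>
      obtain ⟨j, y⟩ := y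
      by_cases hij : i = j
      · subst hij
        by_cases hxy : x * y = 1
        · have hprod : listProd (P ++ [⟨i, x⟩]) * listProd (⟨i, y⟩ :: Q) =
              listProd P * listProd Q := by
            simp [mul_assoc, ← mul_assoc (of x), ← map_mul, hxy]
          have hy : f i y = -f i x := by rw [eq_inv_of_mul_eq_one_right hxy, hf]
          have := ih hP.left_of_append (hQ.right_of_append (P := [_]))
          rw [hprod]
          simp only [syllableSum_append, syllableSum_cons, syllableSum_nil, hy]
          convert this using 2
          ring
        · have hprod : listProd (P ++ [⟨i, x⟩]) * listProd (⟨i, y⟩ :: Q) =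
              listProd (P ++ ⟨i, x * y⟩ :: Q) := by
            simp [mul_assoc]
          rw [hprod, (hP.append_cons hQ hxy).equiv_listProd]
          simp only [syllableSum_append, syllableSum_cons, syllableSum_nil]
          convert hD i x y using 2
          ring
      · rw [← listProd_append, (hP.append hQ (by simpa using hij)).equiv_listProd,
          syllableSum_append]
        simpa using hD₀

theorem abs_splitSum_mul_sub_le {f : ∀ i, G i → ℝ} {D : ℝ} (hD₀ : 0 ≤ D)
    (hD : ∀ i (x y : G i), |f i (x * y) - f i x - f i y| ≤ D) (hf : ∀ i x, f i x⁻¹ = -f i x)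
    (g h : CoprodI G) : |splitSum f (g * h) - splitSum f g - splitSum f h| ≤ D := by
  simpa only [splitSum, listProd_equiv] using abs_syllableSum_listProd_mul_sub_le hD₀ hD hf
    (Word.isReduced (Word.equiv g)) (Word.isReduced (Word.equiv h))

end Group

end Monoid.CoprodI

/-- **Split quasimorphisms.** If `f_A`, `f_B` are alternating quasimorphisms on `A` and
`B`, then the split quasimorphism `f_A ∗ f_B` on `Γ = A ∗ B` is an alternating
quasimorphism whose defect equals `max (D(f_A)) (D(f_B))`. -/
theorem splitQM_alternating_quasimorphism_defect {G : Bool → Type*} [∀ b, Group (G b)]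
    (f : ∀ b, G b → ℝ)
    (hqm : ∀ b, ∃ C : ℝ, ∀ x y : G b, |f b (x * y) - f b x - f b y| ≤ C)
    (halt : ∀ b, ∀ x : G b, f b x + f b x⁻¹ = 0) :
    (∀ g : Monoid.CoprodI G, splitQM f g + splitQM f g⁻¹ = 0) ∧
    (∃ C : ℝ, ∀ g h : Monoid.CoprodI G, |splitQM f (g * h) - splitQM f g - splitQM f h| ≤ C) ∧
    defect (splitQM f) = max (defect (f true)) (defect (f false)) := by
  classical
  open Monoid.CoprodI in
  have hsplit : splitQM f = splitSum f := rfl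
  have hinv : ∀ b x, f b x⁻¹ = -f b x := fun b x => eq_neg_of_add_eq_zero_right (halt b x)
  have hone : ∀ b, f b 1 = 0 := fun b => self_eq_neg.mp (by simpa using hinv b 1)
  have hD : ∀ b (x y : G b), |f b (x * y) - f b x - f b y| ≤
      max (defect (f true)) (defect (f false)) := fun b x y =>
    (IsQuasimorphism.abs_sub_le_defect (hqm b) x y).trans (by cases b <;> simp)
  have hbound : ∀ g h, |splitQM f (g * h) - splitQM f g - splitQM f h| ≤
      max (defect (f true)) (defect (f false)) :=
    hsplit ▸ abs_splitSum_mul_sub_le (defect_nonneg.trans (le_max_left _ _)) hD hinv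
  have hcomp : ∀ b, splitQM f ∘ of = f b := fun b => hsplit ▸ funext (splitSum_of (hone b))
  refine ⟨fun g => by rw [hsplit, splitSum_inv hinv, add_neg_cancel], ⟨_, hbound⟩,
    le_antisymm (defect_le hbound) (max_le ?_ ?_)⟩
  all_goals exact hcomp _ ▸ IsQuasimorphism.defect_comp_le ⟨_, hbound⟩ of
end

section
/- For a group Γ with infinitely many elements of order different from 2, the defect space D(Γ) of bounded alternating real-valued functions on Γ, equipped with the defect norm, is a non-separable Banach space. -/
/-!
For a bounded `f`, the defect at `(g, g)` gives `|f (g * g) - 2 f g| ≤ ‖f‖`, hence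
`2 sup |f| ≤ sup |f| + ‖f‖`, i.e. the sup norm is dominated by the defect norm; conversely
`‖f‖ ≤ 3 sup |f|`. So the two norms are equivalent on `D(Γ)`, and completeness is that of
bounded functions under uniform convergence.

For non-separability, choose an infinite set `E` of elements of order `≠ 2` containing no
inverse of its own elements (one of `g`, `g⁻¹` for each such pair, via a well-order). For
`A ⊆ E` the antisymmetrized indicator `1_A(g) - 1_A(g⁻¹)` lies in `D(Γ)`, and two distinct
such functions are at defect distance at least `1`. This is an uncountable `1`-separated
family, which no countable set can approximate.
-/

/-- The defect norm of a real-valued function on a group. -/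
noncomputable def defectNorm {G : Type*} [Group G] (f : G → ℝ) : ℝ :=
  ⨆ p : G × G, |f (p.1 * p.2) - f p.1 - f p.2|

/-- The defect space `D(Γ)`: bounded alternating real-valued functions on `Γ`. -/
def defectSpace (Γ : Type*) [Group Γ] : Set (Γ → ℝ) :=
  {f | (∃ C : ℝ, ∀ g : Γ, |f g| ≤ C) ∧ ∀ g : Γ, f g⁻¹ = -f g}

open Filter Set

lemma abs_indicator_one_le_one {α : Type*} (A : Set α) (a : α) :
    |A.indicator (1 : α → ℝ) a| ≤ 1 := by
  by_cases ha : a ∈ A <;> simp [ha]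

section DefectNorm

variable {G : Type*} [Group G] {f u v : G → ℝ} {C : ℝ}

lemma abs_defect_le_three_mul (hC : ∀ g, |f g| ≤ C) (p : G × G) :
    |f (p.1 * p.2) - f p.1 - f p.2| ≤ 3 * C := by
  have h₁ := abs_le.mp (hC (p.1 * p.2))
  have h₂ := abs_le.mp (hC p.1)
  have h₃ := abs_le.mp (hC p.2)
  exact abs_le.mpr ⟨by linarith, by linarith⟩

lemma abs_defect_le_defectNorm (hC : ∀ g, |f g| ≤ C) (g h : G) :
    |f (g * h) - f g - f h| ≤ defectNorm f :=
  le_ciSup (f := fun p : G × G => |f (p.1 * p.2) - f p.1 - f p.2|)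
    ⟨3 * C, forall_mem_range.2 (abs_defect_le_three_mul hC)⟩ (g, h)

lemma defectNorm_le_three_mul (hC : ∀ g, |f g| ≤ C) : defectNorm f ≤ 3 * C :=
  ciSup_le (abs_defect_le_three_mul hC)

lemma abs_le_defectNorm (hC : ∀ g, |f g| ≤ C) (g : G) : |f g| ≤ defectNorm f := by
  have hbdd : BddAbove (range fun g => |f g|) := ⟨C, forall_mem_range.2 hC⟩
  set M := ⨆ g, |f g|
  have hdouble : ∀ g, 2 * |f g| ≤ M + defectNorm f := fun g => calc
    2 * |f g| = |f (g * g) - (f (g * g) - f g - f g)| := by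
      rw [← abs_two, ← abs_mul]; ring_nf
    _ ≤ |f (g * g)| + |f (g * g) - f g - f g| := abs_sub _ _
    _ ≤ M + defectNorm f := add_le_add (le_ciSup hbdd _) (abs_defect_le_defectNorm hC g g)
  have hM : M ≤ (M + defectNorm f) / 2 :=
    ciSup_le fun g => (le_div_iff₀' two_pos).2 (hdouble g)
  linarith [le_ciSup hbdd g]

lemma defectNorm_add_le {Cu Cv : ℝ} (hu : ∀ g, |u g| ≤ Cu) (hv : ∀ g, |v g| ≤ Cv) :
    defectNorm (u + v) ≤ defectNorm u + defectNorm v :=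
  ciSup_le fun p => calc
    |(u + v) (p.1 * p.2) - (u + v) p.1 - (u + v) p.2|
        = |(u (p.1 * p.2) - u p.1 - u p.2) + (v (p.1 * p.2) - v p.1 - v p.2)| := by
      simp only [Pi.add_apply]; ring_nf
    _ ≤ defectNorm u + defectNorm v :=
      (abs_add_le _ _).trans
        (add_le_add (abs_defect_le_defectNorm hu _ _) (abs_defect_le_defectNorm hv _ _))

lemma defectNorm_neg (f : G → ℝ) : defectNorm (-f) = defectNorm f := by
  unfold defectNorm
  congr 1 with p
  simp only [Pi.neg_apply]
  rw [← abs_neg]; ring_nf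

lemma defectNorm_sub_comm (u v : G → ℝ) : defectNorm (u - v) = defectNorm (v - u) := by
  rw [← neg_sub, defectNorm_neg]

end DefectNorm

section DefectSpace

variable {Γ : Type*} [Group Γ]

lemma sub_mem_defectSpace {u v : Γ → ℝ} (hu : u ∈ defectSpace Γ) (hv : v ∈ defectSpace Γ) :
    u - v ∈ defectSpace Γ := by
  obtain ⟨⟨Cu, hCu⟩, hu_alt⟩ := hu
  obtain ⟨⟨Cv, hCv⟩, hv_alt⟩ := hv
  refine ⟨⟨Cu + Cv, fun g => (abs_sub _ _).trans (add_le_add (hCu g) (hCv g))⟩, fun g => ?_⟩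
  simp only [Pi.sub_apply, hu_alt, hv_alt]
  ring

lemma mem_defectSpace_of_tendstoUniformly {ι : Type*} {l : Filter ι} [l.NeBot]
    {F : ι → Γ → ℝ} {f : Γ → ℝ} (hF : ∀ i, F i ∈ defectSpace Γ)
    (hFf : TendstoUniformly F f l) : f ∈ defectSpace Γ := by
  obtain ⟨i, hi⟩ := (Metric.tendstoUniformly_iff.1 hFf 1 one_pos).exists
  obtain ⟨⟨C, hC⟩, -⟩ := hF i
  refine ⟨⟨C + 1, fun g => ?_⟩, fun g => ?_⟩
  · have := hi g
    rw [Real.dist_eq] at this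
    linarith [abs_sub_abs_le_abs_sub (f g) (F i g), hC g]
  · refine tendsto_nhds_unique (hFf.tendsto_at g⁻¹) ?_
    simpa only [(hF _).2 g] using (hFf.tendsto_at g).neg

lemma eventually_defectNorm_sub_lt_of_tendstoUniformly {ι : Type*} {l : Filter ι}
    {F : ι → Γ → ℝ} {f : Γ → ℝ} (hFf : TendstoUniformly F f l) {ε : ℝ} (hε : 0 < ε) :
    ∀ᶠ i in l, defectNorm (F i - f) < ε := by
  filter_upwards [Metric.tendstoUniformly_iff.1 hFf (ε / 4) (by positivity)] with i hi
  have hbound : ∀ g, |(F i - f) g| ≤ ε / 4 := fun g => by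
    rw [Pi.sub_apply, ← Real.dist_eq, dist_comm]
    exact (hi g).le
  linarith [defectNorm_le_three_mul hbound]

theorem defectSpace_complete {F : ℕ → Γ → ℝ} (hF : ∀ n, F n ∈ defectSpace Γ)
    (hF_cauchy : ∀ ε : ℝ, 0 < ε → ∃ N : ℕ, ∀ m n : ℕ, N ≤ m → N ≤ n →
      defectNorm (F m - F n) < ε) :
    ∃ f ∈ defectSpace Γ, ∀ ε : ℝ, 0 < ε → ∃ N : ℕ, ∀ n : ℕ, N ≤ n →
      defectNorm (F n - f) < ε := by
  have hunif : UniformCauchySeqOn F atTop univ := by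
    refine Metric.uniformCauchySeqOn_iff.2 fun ε hε => ?_
    obtain ⟨N, hN⟩ := hF_cauchy ε hε
    refine ⟨N, fun m hm n hn g _ => ?_⟩
    obtain ⟨C, hC⟩ := (sub_mem_defectSpace (hF m) (hF n)).1
    exact (abs_le_defectNorm hC g).trans_lt (hN m n hm hn)
  choose f hf using fun g => cauchySeq_tendsto_of_complete (hunif.cauchySeq (mem_univ g))
  have hFf : TendstoUniformly F f atTop :=
    tendstoUniformlyOn_univ.1 (hunif.tendstoUniformlyOn_of_tendsto fun g _ => hf g)
  refine ⟨f, mem_defectSpace_of_tendstoUniformly hF hFf, fun ε hε => ?_⟩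
  exact eventually_atTop.1 (eventually_defectNorm_sub_lt_of_tendstoUniformly hFf hε)

lemma exists_injective_of_pairwise_one_le_defectNorm {ι : Type*} {F : ι → Γ → ℝ}
    (hF : ∀ i, F i ∈ defectSpace Γ) (hsep : Pairwise fun i j => 1 ≤ defectNorm (F i - F j))
    {T : Set (Γ → ℝ)} (hTD : T ⊆ defectSpace Γ)
    (hdense : ∀ f ∈ defectSpace Γ, ∀ ε : ℝ, 0 < ε → ∃ t ∈ T, defectNorm (f - t) < ε) :
    ∃ φ : ι → T, Function.Injective φ := by
  choose φ hφT hφ using fun i => hdense (F i) (hF i) (1 / 2) (by norm_num)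
  refine ⟨fun i => ⟨φ i, hφT i⟩, fun i j hij => by_contra fun hne => ?_⟩
  have hφij : φ i = φ j := congrArg Subtype.val hij
  obtain ⟨Ci, hCi⟩ := (sub_mem_defectSpace (hF i) (hTD (hφT i))).1
  obtain ⟨Cj, hCj⟩ := (sub_mem_defectSpace (hTD (hφT i)) (hF j)).1
  have htri := defectNorm_add_le hCi hCj
  rw [sub_add_sub_cancel, defectNorm_sub_comm (φ i), hφij] at htri
  linarith [hsep hne, hφ j, hφij ▸ hφ i]

end DefectSpace

section Separated

variable {Γ : Type*} [Group Γ]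

lemma exists_infinite_forall_inv_notMem (hinf : {g : Γ | g * g ≠ 1}.Infinite) :
    ∃ E : Set Γ, E.Infinite ∧ ∀ g ∈ E, g⁻¹ ∉ E := by
  let E := {g : Γ | g * g ≠ 1 ∧ WellOrderingRel g g⁻¹}
  refine ⟨E, fun hE => hinf ((hE.union hE.inv).subset fun g (hg : g * g ≠ 1) => ?_),
    fun g hg hg' => asymm_of WellOrderingRel hg.2 (by simpa using hg'.2)⟩
  have hg_inv : g ≠ g⁻¹ := fun h => hg (by rw [← mul_inv_cancel g, ← h])
  rcases trichotomous_of WellOrderingRel g g⁻¹ with h | h | h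
  · exact Or.inl ⟨hg, h⟩
  · exact absurd h hg_inv
  · refine Or.inr ⟨by rwa [← mul_inv_rev, inv_ne_one], by rwa [inv_inv]⟩

def antisymmetrize (u : Γ → ℝ) (g : Γ) : ℝ := u g - u g⁻¹

lemma antisymmetrize_mem_defectSpace {u : Γ → ℝ} {C : ℝ} (hC : ∀ g, |u g| ≤ C) :
    antisymmetrize u ∈ defectSpace Γ :=
  ⟨⟨C + C, fun g => (abs_sub _ _).trans (add_le_add (hC g) (hC g⁻¹))⟩,
    fun g => by simp only [antisymmetrize, inv_inv, neg_sub]⟩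

lemma antisymmetrize_indicator_mem_defectSpace (A : Set Γ) :
    antisymmetrize (A.indicator 1) ∈ defectSpace Γ :=
  antisymmetrize_mem_defectSpace (abs_indicator_one_le_one A)

lemma one_le_defectNorm_antisymmetrize_indicator_sub_of_mem {A B : Set Γ} {g : Γ}
    (hgA : g ∈ A) (hgB : g ∉ B) (hgA' : g⁻¹ ∉ A) (hgB' : g⁻¹ ∉ B) :
    1 ≤ defectNorm (antisymmetrize (A.indicator 1) - antisymmetrize (B.indicator 1)) := by
  have hval : (antisymmetrize (A.indicator 1) - antisymmetrize (B.indicator 1)) g = 1 := by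
    simp [antisymmetrize, hgA, hgB, hgA', hgB']
  obtain ⟨C, hC⟩ := (sub_mem_defectSpace (antisymmetrize_indicator_mem_defectSpace A)
    (antisymmetrize_indicator_mem_defectSpace B)).1
  simpa [hval] using abs_le_defectNorm hC g

lemma one_le_defectNorm_antisymmetrize_indicator_sub {E A B : Set Γ}
    (hE : ∀ g ∈ E, g⁻¹ ∉ E) (hA : A ⊆ E) (hB : B ⊆ E) (hAB : A ≠ B) :
    1 ≤ defectNorm (antisymmetrize (A.indicator 1) - antisymmetrize (B.indicator 1)) := by
  by_cases hAB' : A ⊆ B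
  · obtain ⟨g, hgB, hgA⟩ := not_subset.1 fun hBA => hAB (hAB'.antisymm hBA)
    rw [defectNorm_sub_comm]
    exact one_le_defectNorm_antisymmetrize_indicator_sub_of_mem hgB hgA
      (fun h => hE g (hB hgB) (hB h)) (fun h => hE g (hB hgB) (hA h))
  · obtain ⟨g, hgA, hgB⟩ := not_subset.1 hAB'
    exact one_le_defectNorm_antisymmetrize_indicator_sub_of_mem hgA hgB
      (fun h => hE g (hA hgA) (hA h)) (fun h => hE g (hA hgA) (hB h))

end Separated

/-- **Non-separability and completeness of the defect space.** If `Γ` has infinitely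
many elements of order different from 2 (i.e. infinitely many `g` with `g * g ≠ 1`),
then the space `D(Γ)` of bounded alternating functions with the defect norm is a
Banach space (complete) which is not separable. -/
theorem defectSpace_complete_not_separable (Γ : Type*) [Group Γ]
    (hinf : {g : Γ | g * g ≠ 1}.Infinite) :
    -- completeness: every Cauchy sequence (w.r.t. the defect norm) converges in `D(Γ)`
    (∀ F : ℕ → Γ → ℝ, (∀ n, F n ∈ defectSpace Γ) →
      (∀ ε : ℝ, 0 < ε → ∃ N : ℕ, ∀ m n : ℕ, N ≤ m → N ≤ n →
        defectNorm (F m - F n) < ε) →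
      ∃ f ∈ defectSpace Γ, ∀ ε : ℝ, 0 < ε → ∃ N : ℕ, ∀ n : ℕ, N ≤ n →
        defectNorm (F n - f) < ε) ∧
    -- non-separability: no countable subset of `D(Γ)` is dense w.r.t. the defect norm
    ¬ ∃ T : Set (Γ → ℝ), T ⊆ defectSpace Γ ∧ T.Countable ∧
        ∀ f ∈ defectSpace Γ, ∀ ε : ℝ, 0 < ε → ∃ t ∈ T, defectNorm (f - t) < ε := by
  refine ⟨fun F hF hF_cauchy => defectSpace_complete hF hF_cauchy, ?_⟩
  rintro ⟨T, hTD, hT, hdense⟩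
  obtain ⟨E, hE_inf, hE_inv⟩ := exists_infinite_forall_inv_notMem hinf
  obtain ⟨φ, hφ⟩ := exists_injective_of_pairwise_one_le_defectNorm
    (F := fun A : Set E => antisymmetrize ((Subtype.val '' A).indicator 1))
    (fun A => antisymmetrize_indicator_mem_defectSpace _)
    (fun A B hAB => one_le_defectNorm_antisymmetrize_indicator_sub hE_inv
      (Subtype.coe_image_subset E A) (Subtype.coe_image_subset E B)
      (Subtype.val_injective.image_injective.ne hAB))
    hTD hdense
  have := hT.to_subtype
  obtain ⟨e, he⟩ := Countable.exists_injective_nat T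
  -- `Set E → T → ℕ → E` would be injective, against Cantor's theorem.
  exact Function.cantor_injective _ ((hE_inf.natEmbedding E).injective.comp (he.comp hφ))
end

section
/- Let Γ be a free group of finite rank n ≥ 2 and H ≤ Γ a subgroup of finite rank and infinite index. Then there exists a basis {x₁,…,xₙ} of Γ such that for every g ∈ Γ and every i, gHg⁻¹ ∩ ⟨xᵢ⟩ = {1}; i.e., no conjugate of H contains a nontrivial power of any basis element. -/
/-!
Identify `Γ` with `F = FreeGroup (Fin n)` and let `V` be the Stallings core of `H`: the set of
cosets in `F ⧸ H` visited by the reduced words of the elements of `H`, which is finite because `H`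
is finitely generated. If `g h g⁻¹ = x ^ m` with `h ∈ H`, `m ≠ 0` and `x` a positive word, then
the cyclic reduction of `h` is a rotation of `x ^ m`; since every power of `h` lies in `H`, some
point of `V` reads all powers of `x` without leaving `V`. So it suffices to find a basis of
positive words none of which reads all its powers inside `V`.

Start from the standard basis. If some point reads `xᵢ` but not all powers of `xⱼ`, the
transvection `xᵢ ↦ xᵢ xⱼ ^ K` with `K = (#V)!` strictly shrinks the set of points reading `xᵢ`,
because `xⱼ ^ K` fixes every point reading all powers of `xⱼ`. If no such move is possible while
some `xᵢ` reads all its powers from some point, the set of these points is finite, nonempty and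
invariant under every basis element, hence all of `F ⧸ H`, contradicting infinite index.
-/

open List
open scoped Nat

namespace List

variable {β : Type*} (L L' : List β)

theorem flatten_replicate_add (j k : ℕ) :
    (replicate (j + k) L).flatten = (replicate j L).flatten ++ (replicate k L).flatten := by
  rw [replicate_add, flatten_append]

theorem flatten_replicate_flatten_replicate (k m : ℕ) :
    (replicate k (replicate m L).flatten).flatten = (replicate (k * m) L).flatten := by
  induction k with
  | zero => simp
  | succ k ih =>
    rw [replicate_succ, flatten_cons, ih, add_mul, one_mul, add_comm, flatten_replicate_add]

theorem flatten_replicate_succ_append (k : ℕ) :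
    (replicate (k + 1) (L ++ L')).flatten = L ++ ((replicate k (L' ++ L)).flatten ++ L') := by
  induction k with
  | zero => simp
  | succ k ih => rw [replicate_succ, flatten_cons, ih, replicate_succ]; simp

theorem isSuffix_flatten_replicate {j k : ℕ} (h : j ≤ k) :
    (replicate j L).flatten <:+ (replicate k L).flatten := by
  obtain ⟨i, rfl⟩ := Nat.exists_eq_add_of_le' h
  rw [flatten_replicate_add]
  exact suffix_append _ _

end List

namespace FreeGroup

variable {α : Type*} {L L' C : List (α × Bool)}

def IsPositive (L : List (α × Bool)) : Prop := ∀ a ∈ L, a.2 = true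

theorem IsPositive.append (h : IsPositive L) (h' : IsPositive L') : IsPositive (L ++ L') := by
  simp only [IsPositive, mem_append]
  rintro a (ha | ha)
  exacts [h a ha, h' a ha]

theorem IsPositive.flatten_replicate (h : IsPositive L) (n : ℕ) :
    IsPositive (replicate n L).flatten := by
  simp only [IsPositive, mem_flatten, mem_replicate]
  rintro a ⟨_, ⟨-, rfl⟩, ha⟩
  exact h a ha

theorem IsPositive.isCyclicallyReduced (h : IsPositive L) : IsCyclicallyReduced L := by
  have hrel : ∀ a ∈ L, ∀ b ∈ L, a.1 = b.1 → a.2 = b.2 := fun a ha b hb _ => by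
    rw [h a ha, h b hb]
  exact ⟨(pairwise_of_forall_mem_list hrel).isChain, fun a ha b hb =>
    hrel a (mem_of_getLast? ha) b (mem_of_head? hb)⟩

theorem IsPositive.isReduced (h : IsPositive L) : IsReduced L :=
  h.isCyclicallyReduced.isReduced

theorem IsCyclicallyReduced.cons_rotate {a : α × Bool} (h : IsCyclicallyReduced (a :: L)) :
    IsCyclicallyReduced (L ++ [a]) := by
  rcases eq_nil_or_concat' L with rfl | ⟨M, b, rfl⟩
  · simp
  have hred : IsReduced (a :: (M ++ [b])) := h.isReduced
  have hba : b.1 = a.1 → b.2 = a.2 :=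
    h.2 b (by rw [← cons_append, getLast?_concat]; rfl) a rfl
  refine ⟨isChain_append.2 ⟨hred.infix ⟨[a], [], by simp⟩, isChain_singleton a, ?_⟩, ?_⟩
  · rintro x hx y ⟨⟩
    rw [getLast?_concat, Option.mem_some_iff] at hx
    exact hx ▸ hba
  · intro x hx y hy
    rw [getLast?_concat, Option.mem_some_iff] at hx
    subst hx
    rcases M with _ | ⟨c, M⟩
    · cases hy
      exact fun h' => (hba h'.symm).symm
    · cases hy
      exact (isReduced_cons_cons.1 hred).1

theorem IsCyclicallyReduced.rotate (h : IsCyclicallyReduced L) (n : ℕ) :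
    IsCyclicallyReduced (L.rotate n) := by
  induction n with
  | zero => simpa
  | succ n ih =>
    rw [← rotate_rotate]
    rcases hL : L.rotate n with _ | ⟨a, M⟩
    · simp
    · rw [hL] at ih
      simpa using ih.cons_rotate

theorem IsCyclicallyReduced.of_isRotated (h : IsCyclicallyReduced L) (hL : L ~r L') :
    IsCyclicallyReduced L' := by
  obtain ⟨n, rfl⟩ := hL
  exact h.rotate n

theorem IsReduced.cons_append_inv {x : α × Bool} (hL : IsReduced L) (hne : L ≠ [])
    (hhead : L.head? ≠ some (x.1, !x.2)) (hlast : L.getLast? ≠ some x) :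
    IsReduced (x :: L ++ [(x.1, !x.2)]) := by
  have hcancel : ∀ {a b : α × Bool}, b ≠ (a.1, !a.2) → a.1 = b.1 → a.2 = b.2 := by
    rintro ⟨a₁, a₂⟩ ⟨b₁, b₂⟩ hab (rfl : a₁ = b₁)
    cases a₂ <;> cases b₂ <;> simp_all
  refine IsReduced.append_overlap (L₁ := [x]) ?_ ?_ hne
  · obtain ⟨b, L, rfl⟩ := exists_cons_of_ne_nil hne
    exact isReduced_cons_cons.2 ⟨hcancel (by simpa using hhead), hL⟩
  · refine isChain_append.2 ⟨hL, isChain_singleton _, fun a ha b hb => ?_⟩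
    obtain rfl : (x.1, !x.2) = b := by simpa using hb
    refine hcancel fun h => hlast ?_
    obtain ⟨h₁, h₂⟩ := Prod.ext_iff.1 h
    rw [Option.mem_def.1 ha]
    exact congrArg some (Prod.ext h₁.symm (by simpa using h₂.symm))

section CyclicReduction

variable [DecidableEq α]

open reduceCyclically

theorem IsCyclicallyReduced.reduceCyclically_eq (h : IsCyclicallyReduced L) :
    reduceCyclically L = L := by
  induction L using bidirectionalRec with
  | nil => simp
  | singleton => simp
  | cons_append a M b _ =>
    rw [reduceCyclically.cons_append, if_neg]
    · simp
    rintro ⟨h1, h2⟩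
    have := h.2 b (by rw [← cons_append, getLast?_concat]; rfl) a rfl h1
    simp [← h2] at this

theorem IsCyclicallyReduced.reduceCyclically_append_invRev (h : IsCyclicallyReduced C)
    (P : List (α × Bool)) : reduceCyclically (P ++ C ++ invRev P) = C := by
  induction P with
  | nil => simpa using h.reduceCyclically_eq
  | cons p P ih =>
    rw [show p :: P ++ C ++ invRev (p :: P) = p :: (P ++ C ++ invRev P ++ [(p.1, !p.2)]) by
      simp [invRev], reduceCyclically.cons_append, if_pos (by simp), ih]

theorem reduce_cons_cons_inv (x : α × Bool) (R : List (α × Bool)) :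
    reduce (x :: (x.1, !x.2) :: R) = reduce R :=
  reduce.Step.eq Red.Step.cons_not

theorem reduce_append_cons_inv (x : α × Bool) (R : List (α × Bool)) :
    reduce (R ++ [x, (x.1, !x.2)]) = reduce R := by
  rw [← reduce_append_reduce_reduce, reduce_cons_cons_inv, reduce_nil, append_nil, reduce.idem]

theorem IsCyclicallyReduced.isRotated_reduceCyclically_reduce_cons_append_inv
    (hC : IsCyclicallyReduced C) (x : α × Bool) :
    reduceCyclically (reduce (x :: C ++ [(x.1, !x.2)])) ~r C := by
  rcases eq_or_ne C [] with rfl | hne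
  · simp
  by_cases hhead : C.head? = some (x.1, !x.2)
  · obtain ⟨M, rfl⟩ : ∃ M, C = (x.1, !x.2) :: M := by
      obtain ⟨c, M, rfl⟩ := exists_cons_of_ne_nil hne
      exact ⟨M, by simpa using hhead⟩
    have hrot := hC.cons_rotate
    rw [cons_append, cons_append, reduce_cons_cons_inv, hrot.isReduced.reduce_eq,
      hrot.reduceCyclically_eq]
    exact IsRotated.cons_append_singleton.symm
  by_cases hlast : C.getLast? = some x
  · obtain ⟨D, rfl⟩ : ∃ D, C = D ++ [x] := by
      obtain ⟨D, c, rfl⟩ := (eq_nil_or_concat' C).resolve_left hne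
      exact ⟨D, by simpa using hlast⟩
    have hrot : IsCyclicallyReduced (x :: D) := hC.of_isRotated (isRotated_concat x D)
    rw [show x :: (D ++ [x]) ++ [(x.1, !x.2)] = (x :: D) ++ [x, (x.1, !x.2)] by simp,
      reduce_append_cons_inv, hrot.isReduced.reduce_eq, hrot.reduceCyclically_eq]
    exact (isRotated_concat x D).symm
  · rw [(hC.isReduced.cons_append_inv hne hhead hlast).reduce_eq,
      show x :: C ++ [(x.1, !x.2)] = [x] ++ C ++ invRev [x] by simp [invRev],
      hC.reduceCyclically_append_invRev]

theorem isRotated_reduceCyclically_reduce_cons_append_inv (x : α × Bool) (hL : IsReduced L) :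
    reduceCyclically (reduce (x :: L ++ [(x.1, !x.2)])) ~r reduceCyclically L := by
  obtain ⟨P, C, hC, rfl⟩ : ∃ P C, IsCyclicallyReduced C ∧ L = P ++ C ++ invRev P :=
    ⟨_, _, isCyclicallyReduced hL, (conj_conjugator_reduceCyclically L).symm⟩
  rw [hC.reduceCyclically_append_invRev]
  cases P with
  | nil => simpa using hC.isRotated_reduceCyclically_reduce_cons_append_inv x
  | cons p P =>
    have hL' : p :: P ++ C ++ invRev (p :: P) = p :: (P ++ C ++ invRev P ++ [(p.1, !p.2)]) := by
      simp [invRev]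
    rw [hL'] at hL ⊢
    by_cases hp : p = (x.1, !x.2)
    · subst hp
      rw [show x :: (x.1, !x.2) :: (P ++ C ++ invRev P ++ [(x.1, !!x.2)]) ++ [(x.1, !x.2)] =
          x :: (x.1, !x.2) :: ((P ++ C ++ invRev P) ++ [x, (x.1, !x.2)]) by simp,
        reduce_cons_cons_inv, reduce_append_cons_inv,
        (hL.infix ⟨[(x.1, !x.2)], [x], by simp⟩).reduce_eq, hC.reduceCyclically_append_invRev]
    · have hlast : (p :: (P ++ C ++ invRev P ++ [(p.1, !p.2)])).getLast? ≠ some x := by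
        rw [← cons_append, getLast?_concat, Ne, Option.some.injEq]
        rintro rfl
        exact hp (by simp)
      rw [(hL.cons_append_inv (cons_ne_nil _ _) (by simpa using hp) hlast).reduce_eq,
        show x :: (p :: (P ++ C ++ invRev P ++ [(p.1, !p.2)])) ++ [(x.1, !x.2)] =
          (x :: p :: P) ++ C ++ invRev (x :: p :: P) by simp [invRev],
        hC.reduceCyclically_append_invRev]

theorem isRotated_reduceCyclically_of_isConj {y z : FreeGroup α} (h : IsConj y z) :
    reduceCyclically z.toWord ~r reduceCyclically y.toWord := by
  obtain ⟨g, rfl⟩ := isConj_iff.1 h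
  rw [← mk_toWord (x := g)]
  induction g.toWord with
  | nil => simpa [← one_eq_mk] using IsRotated.refl _
  | cons x l ih =>
    set w := mk l * y * (mk l)⁻¹
    have hw : mk (x :: l) * y * (mk (x :: l))⁻¹ = mk (x :: w.toWord ++ [(x.1, !x.2)]) := by
      have hinv : (mk [x])⁻¹ = mk [(x.1, !x.2)] := by simp [inv_mk, invRev]
      rw [show x :: w.toWord ++ [(x.1, !x.2)] = [x] ++ w.toWord ++ [(x.1, !x.2)] from rfl,
        ← mul_mk, ← mul_mk, mk_toWord, ← hinv, show x :: l = [x] ++ l from rfl, ← mul_mk]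
      simp only [w]
      group
    rw [hw, toWord_mk]
    exact (isRotated_reduceCyclically_reduce_cons_append_inv x isReduced_toWord).trans ih

theorem reduce_cons_isSuffix (x : α × Bool) (L : List (α × Bool)) :
    reduce (x :: L) <:+ x :: reduce L := by
  rw [reduce.cons]
  rcases reduce L with _ | ⟨y, R⟩
  · exact suffix_rfl
  · dsimp only
    split
    · exact (suffix_cons y R).trans (suffix_cons x _)
    · exact suffix_rfl

theorem exists_isSuffix_mk_eq_of_isSuffix_reduce {s L : List (α × Bool)} (h : s <:+ reduce L) :
    ∃ t, t <:+ L ∧ mk t = mk s := by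
  induction L generalizing s with
  | nil => exact ⟨[], nil_suffix, by rw [suffix_nil.1 h]⟩
  | cons x L ih =>
    rcases suffix_cons_iff.1 (h.trans (reduce_cons_isSuffix x L)) with rfl | hs
    · exact ⟨x :: L, suffix_rfl, by
      rw [show x :: L = [x] ++ L from rfl, show x :: reduce L = [x] ++ reduce L from rfl,
        ← mul_mk, ← mul_mk, reduce.self]⟩
    · obtain ⟨t, ht, hts⟩ := ih hs
      exact ⟨t, ht.trans (suffix_cons x L), hts⟩

theorem toWord_eq_of_isReduced {z : FreeGroup α} {W : List (α × Bool)} (hW : IsReduced W)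
    (h : mk W = z) : z.toWord = W := by
  rw [← h, toWord_mk, hW.reduce_eq]

theorem toWord_mul_pow_of_isPositive {x y : FreeGroup α} (hx : IsPositive x.toWord)
    (hy : IsPositive y.toWord) (n : ℕ) :
    (x * y ^ n).toWord = x.toWord ++ (replicate n y.toWord).flatten :=
  toWord_eq_of_isReduced (hx.append (hy.flatten_replicate n)).isReduced
    (by rw [← mul_mk, ← pow_mk, mk_toWord, mk_toWord])

end CyclicReduction

section Reading

variable {X : Type*} [MulAction (FreeGroup α) X] {V : Set X} {L L₁ L₂ : List (α × Bool)} {q : X}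

/-- The path of the Schreier graph labelled `L` and ending at `q` stays in `V`; under a left
action it is traversed from the last letter of `L`, so its vertices are `mk s • q` for the
suffixes `s` of `L`. -/
def Reads (V : Set X) (L : List (α × Bool)) (q : X) : Prop :=
  ∀ s, s <:+ L → mk s • q ∈ V

def ReadsPowers (V : Set X) (L : List (α × Bool)) (q : X) : Prop :=
  ∀ k, Reads V (replicate k L).flatten q

theorem Reads.mem (h : Reads V L q) : q ∈ V := by
  simpa [← one_eq_mk] using h [] nil_suffix

theorem Reads.of_isSuffix (h : Reads V L q) (h' : L₁ <:+ L) : Reads V L₁ q :=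
  fun s hs => h s (hs.trans h')

theorem reads_append : Reads V (L₁ ++ L₂) q ↔ Reads V L₂ q ∧ Reads V L₁ (mk L₂ • q) := by
  refine ⟨fun h => ⟨h.of_isSuffix (suffix_append _ _), fun s hs => ?_⟩, fun ⟨h₂, h₁⟩ s hs => ?_⟩
  · rw [smul_smul, mul_mk]
    exact h _ (suffix_append_self_iff.2 hs)
  · rcases suffix_or_suffix_of_suffix hs (suffix_append L₁ L₂) with hs' | ⟨s₁, rfl⟩
    · exact h₂ s hs'
    · rw [← mul_mk, mul_smul]
      exact h₁ s₁ (suffix_append_self_iff.1 hs)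

theorem ReadsPowers.reads (h : ReadsPowers V L q) : Reads V L q := by
  simpa using h 1

theorem readsPowers_of_pow_smul_eq {d : ℕ} (hd : 0 < d) (hq : mk L ^ d • q = q)
    (h : Reads V (replicate d L).flatten q) : ReadsPowers V L q := by
  intro k
  induction k using Nat.strong_induction_on with
  | _ k ih =>
    rcases le_or_gt k d with hk | hk
    · exact h.of_isSuffix (isSuffix_flatten_replicate L hk)
    · obtain ⟨j, rfl⟩ := Nat.exists_eq_add_of_lt hk
      rw [show d + j + 1 = (j + 1) + d by omega, flatten_replicate_add, reads_append,
        ← pow_mk, hq]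
      exact ⟨h, ih _ (by omega)⟩

theorem Reads.exists_pow_smul_eq (hV : V.Finite) (h : Reads V (replicate V.ncard L).flatten q) :
    ∃ d, 0 < d ∧ d ≤ V.ncard ∧ mk L ^ d • q = q := by
  have hmaps : Set.MapsTo (fun j => mk L ^ j • q) ↑(Finset.range (V.ncard + 1)) ↑hV.toFinset := by
    intro j hj
    simp only [Finset.coe_range, Set.mem_Iio] at hj
    rw [Finset.mem_coe, Set.Finite.mem_toFinset]
    dsimp only
    rw [pow_mk]
    exact h _ (isSuffix_flatten_replicate L (by omega))
  obtain ⟨i, hi, j, hj, hij, heq⟩ := Finset.exists_ne_map_eq_of_card_lt_of_maps_to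
    (by simp [← Set.ncard_eq_toFinset_card V hV]) hmaps
  simp only [Finset.mem_range] at hi hj
  wlog hlt : i < j generalizing i j
  · exact this j i hij.symm heq.symm hj hi (by omega)
  refine ⟨j - i, by omega, by omega, ?_⟩
  rw [← smul_left_cancel_iff (mk L ^ i), smul_smul, ← pow_add, Nat.add_sub_cancel' hlt.le]
  exact heq.symm

theorem reads_pow_factorial_iff (hV : V.Finite) :
    Reads V (replicate V.ncard ! L).flatten q ↔ ReadsPowers V L q := by
  refine ⟨fun h => ?_, fun h => h _⟩
  obtain ⟨d, hd, hdV, hq⟩ := (h.of_isSuffix (isSuffix_flatten_replicate L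
    (Nat.self_le_factorial _))).exists_pow_smul_eq hV
  exact readsPowers_of_pow_smul_eq hd hq
    (h.of_isSuffix (isSuffix_flatten_replicate L (hdV.trans (Nat.self_le_factorial _))))

theorem ReadsPowers.pow_factorial_smul (hV : V.Finite) (h : ReadsPowers V L q) :
    mk L ^ V.ncard ! • q = q := by
  obtain ⟨d, hd, hdV, hq⟩ := (h _).exists_pow_smul_eq hV
  exact MulAction.pow_smul_eq_iff_period_dvd.2
    ((MulAction.pow_smul_eq_iff_period_dvd.1 hq).trans (Nat.dvd_factorial hd hdV))

theorem reads_append_pow_factorial (hV : V.Finite) :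
    Reads V (L₁ ++ (replicate V.ncard ! L₂).flatten) q ↔ ReadsPowers V L₂ q ∧ Reads V L₁ q := by
  rw [reads_append, reads_pow_factorial_iff hV, ← pow_mk]
  refine and_congr_right fun h => ?_
  rw [h.pow_factorial_smul hV]

theorem ReadsPowers.append_comm (h : ReadsPowers V (L₁ ++ L₂) q) :
    ReadsPowers V (L₂ ++ L₁) (mk L₂ • q) := by
  intro k
  have := h (k + 1)
  rw [flatten_replicate_succ_append, reads_append] at this
  exact (reads_append.1 this.1).2

theorem ReadsPowers.exists_of_isRotated (h : ReadsPowers V L q) {L' : List (α × Bool)}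
    (hL : L ~r L') : ∃ q', ReadsPowers V L' q' := by
  obtain ⟨n, hn, rfl⟩ := isRotated_iff_mod.1 hL
  rw [rotate_eq_drop_append_take hn]
  rw [← take_append_drop n L] at h
  exact ⟨_, h.append_comm⟩

theorem ReadsPowers.of_flatten_replicate {m : ℕ} (hm : m ≠ 0)
    (h : ReadsPowers V (replicate m L).flatten q) : ReadsPowers V L q := by
  intro k
  have := h k
  rw [flatten_replicate_flatten_replicate] at this
  exact this.of_isSuffix (isSuffix_flatten_replicate L (Nat.le_mul_of_pos_right k (by omega)))

theorem ReadsPowers.smul (h : ReadsPowers V L q) : ReadsPowers V L (mk L • q) := by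
  intro k
  have := h (k + 1)
  rw [replicate_succ', flatten_concat, reads_append] at this
  exact this.2

end Reading

section StallingsCore

variable [DecidableEq α] {H : Subgroup (FreeGroup α)}

/-- The cosets visited by the reduced words of the elements of `H`: the vertex set of the
Stallings core graph of `H`. -/
def stallingsCore (H : Subgroup (FreeGroup α)) : Set (FreeGroup α ⧸ H) :=
  {q | ∃ h ∈ H, ∃ s, s <:+ h.toWord ∧ (mk s : FreeGroup α ⧸ H) = q}

theorem reads_stallingsCore {h : FreeGroup α} (hh : h ∈ H) :
    Reads (stallingsCore H) h.toWord ((1 : FreeGroup α) : FreeGroup α ⧸ H) := by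
  intro s hs
  rw [MulAction.Quotient.smul_mk, smul_eq_mul, mul_one]
  exact ⟨h, hh, s, hs, rfl⟩

theorem stallingsCore_finite (hH : H.FG) : (stallingsCore H).Finite := by
  obtain ⟨T, rfl⟩ := hH
  set S : Set (FreeGroup α ⧸ Subgroup.closure (T : Set (FreeGroup α))) :=
    ⋃ t ∈ insert 1 T, (fun s => (mk s : FreeGroup α ⧸ _)) '' {s | s ∈ t.toWord.tails}
  have hS : S.Finite :=
    (insert 1 T).finite_toSet.biUnion fun t _ => (t.toWord.tails.finite_toSet).image _
  refine hS.subset ?_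
  rintro _ ⟨h, hh, s, hs, rfl⟩
  induction hh using Subgroup.closure_induction generalizing s with
  | mem t ht => exact Set.mem_biUnion (Finset.mem_insert_of_mem ht) ⟨s, (mem_tails _ _).2 hs, rfl⟩
  | one => exact Set.mem_biUnion (Finset.mem_insert_self 1 T) ⟨s, (mem_tails _ _).2 hs, rfl⟩
  | mul x y _ hy ihx ihy =>
    rw [toWord_mul] at hs
    obtain ⟨t, ht, hts⟩ := exists_isSuffix_mk_eq_of_isSuffix_reduce hs
    rw [← hts]
    rcases suffix_or_suffix_of_suffix ht (suffix_append x.toWord y.toWord) with ht' | ⟨t₁, rfl⟩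
    · exact ihy t ht'
    · rw [← mul_mk, mk_toWord, QuotientGroup.mk_mul_of_mem _ hy]
      exact ihx t₁ (suffix_append_self_iff.1 ht)
  | inv x hx ih =>
    rw [toWord_inv] at hs
    obtain ⟨u, hu⟩ := hs
    have hx' : x.toWord = invRev s ++ invRev u := by rw [← invRev_append, hu, invRev_invRev]
    have hs' : mk s = mk (invRev u) * x⁻¹ := by
      rw [← mk_toWord (x := x), hx', ← mul_mk, mul_inv_rev, mul_inv_cancel_left, inv_mk,
        invRev_invRev]
    rw [hs', QuotientGroup.mk_mul_of_mem _ (inv_mem hx)]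
    exact ih _ (hx' ▸ suffix_append _ _)

theorem exists_readsPowers_reduceCyclically {h : FreeGroup α} (hh : h ∈ H) :
    ∃ q, ReadsPowers (stallingsCore H) (reduceCyclically h.toWord) q := by
  set P := reduceCyclically.conjugator h.toWord
  refine ⟨mk (invRev P) • ((1 : FreeGroup α) : FreeGroup α ⧸ H), fun k => ?_⟩
  have hread := reads_stallingsCore (H.pow_mem hh (k + 1))
  rw [toWord_pow, reduceCyclically.reduce_flatten_replicate_succ isReduced_toWord,
    append_assoc, reads_append, reads_append] at hread
  exact hread.1.2.of_isSuffix (isSuffix_flatten_replicate _ k.le_succ)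

end StallingsCore

end FreeGroup

namespace FreeGroupBasis

variable {ι G : Type*} [Group G]

theorem closure_range_eq_top (b : FreeGroupBasis ι G) : Subgroup.closure (Set.range b) = ⊤ := by
  have hrange : Set.range b = b.repr.symm.toMonoidHom '' Set.range FreeGroup.of := by
    rw [← Set.range_comp]
    rfl
  rw [hrange, ← MonoidHom.map_closure, FreeGroup.closure_range_of, ← MonoidHom.range_eq_map,
    MonoidHom.range_eq_top]
  exact b.repr.symm.surjective

variable [DecidableEq ι]

def transvection (b : FreeGroupBasis ι G) {i j : ι} (hij : i ≠ j) (k : ℤ) : FreeGroupBasis ι G :=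
  b.map <| MonoidHom.toMulEquiv
    (b.lift (Function.update b i (b i * b j ^ k)))
    (b.lift (Function.update b i (b i * b j ^ (-k))))
    (b.ext_hom _ _ fun l => by
      rcases eq_or_ne l i with rfl | hl <;>
        simp [lift_apply_apply, Function.update_of_ne hij.symm, *])
    (b.ext_hom _ _ fun l => by
      rcases eq_or_ne l i with rfl | hl <;>
        simp [lift_apply_apply, Function.update_of_ne hij.symm, *])

theorem transvection_apply (b : FreeGroupBasis ι G) {i j : ι} (hij : i ≠ j) (k : ℤ) (l : ι) :
    b.transvection hij k l = Function.update b i (b i * b j ^ k) l := by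
  simp [transvection, lift_apply_apply]

end FreeGroupBasis

theorem Set.Finite.eq_univ_of_forall_smul_mem {G X : Type*} [Group G] [MulAction G X]
    [MulAction.IsPretransitive G X] {S : Set G} (hS : Subgroup.closure S = ⊤) {W : Set X}
    (hW : W.Finite) (hne : W.Nonempty) (hWS : ∀ g ∈ S, ∀ x ∈ W, g • x ∈ W) : W = Set.univ := by
  have key : ∀ g : G, ∀ x ∈ W, g • x ∈ W := by
    intro g
    induction (hS ▸ Subgroup.mem_top g : g ∈ Subgroup.closure S) using
      Subgroup.closure_induction with
    | mem g hg => exact hWS g hg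
    | one => simp
    | mul g h _ _ ihg ihh =>
      intro x hx
      rw [mul_smul]
      exact ihg _ (ihh x hx)
    | inv g _ ihg =>
      -- `g •` maps the finite set `W` injectively into itself, hence onto itself
      intro x hx
      obtain ⟨y, hy, rfl⟩ :=
        ((hW.injOn_iff_bijOn_of_mapsTo ihg).1 (MulAction.injective g).injOn).surjOn hx
      rwa [inv_smul_smul]
  obtain ⟨x₀, hx₀⟩ := hne
  refine Set.eq_univ_of_forall fun x => ?_
  obtain ⟨g, rfl⟩ := MulAction.exists_smul_eq G x₀ x
  exact key g x₀ hx₀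

namespace FreeGroup

section Descent

open FreeGroupBasis

variable {α X : Type*} [DecidableEq α] [Fintype α] [MulAction (FreeGroup α) X] {V : Set X}

noncomputable def readsCount (V : Set X) (b : FreeGroupBasis α (FreeGroup α)) : ℕ :=
  ∑ i, {q | Reads V (b i).toWord q}.ncard

theorem exists_basis_readsCount_lt (hV : V.Finite) {b : FreeGroupBasis α (FreeGroup α)}
    (hb : ∀ i, IsPositive (b i).toWord) {i j : α} (hij : i ≠ j) {q : X}
    (hqi : Reads V (b i).toWord q) (hqj : ¬ ReadsPowers V (b j).toWord q) :
    ∃ b' : FreeGroupBasis α (FreeGroup α),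
      (∀ l, IsPositive (b' l).toWord) ∧ readsCount V b' < readsCount V b := by
  set b' := b.transvection hij (V.ncard ! : ℤ)
  have hb'i : (b' i).toWord = (b i).toWord ++ (replicate V.ncard ! (b j).toWord).flatten := by
    rw [transvection_apply, Function.update_self, zpow_natCast,
      toWord_mul_pow_of_isPositive (hb i) (hb j)]
  have hb'l : ∀ l ≠ i, b' l = b l := fun l hl => by
    rw [transvection_apply, Function.update_of_ne hl]
  have hlt : {q | Reads V (b' i).toWord q}.ncard < {q | Reads V (b i).toWord q}.ncard := by
    simp only [hb'i, reads_append_pow_factorial hV]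
    refine Set.ncard_lt_ncard ⟨fun q hq => hq.2, fun hsub => hqj (hsub hqi).1⟩
      (hV.subset fun q hq => hq.mem)
  refine ⟨b', fun l => ?_, Finset.sum_lt_sum (fun l _ => ?_) ⟨i, Finset.mem_univ i, hlt⟩⟩
  · rcases eq_or_ne l i with rfl | hl
    · rw [hb'i]
      exact (hb l).append ((hb j).flatten_replicate _)
    · rw [hb'l l hl]
      exact hb l
  · rcases eq_or_ne l i with rfl | hl
    · exact hlt.le
    · rw [hb'l l hl]

theorem exists_basis_forall_not_readsPowers [Infinite X] [MulAction.IsPretransitive (FreeGroup α) X]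
    (hV : V.Finite) (b : FreeGroupBasis α (FreeGroup α)) (hb : ∀ i, IsPositive (b i).toWord) :
    ∃ b' : FreeGroupBasis α (FreeGroup α),
      (∀ i, IsPositive (b' i).toWord) ∧ ∀ i q, ¬ ReadsPowers V (b' i).toWord q := by
  induction hn : readsCount V b using Nat.strong_induction_on generalizing b with
  | _ n ih =>
  by_cases hdone : ∀ i q, ¬ ReadsPowers V (b i).toWord q
  · exact ⟨b, hb, hdone⟩
  push Not at hdone
  obtain ⟨i₀, q₀, hq₀⟩ := hdone
  by_cases hstep : ∃ i j, i ≠ j ∧ ∃ q, Reads V (b i).toWord q ∧ ¬ ReadsPowers V (b j).toWord q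
  · obtain ⟨i, j, hij, q, hqi, hqj⟩ := hstep
    obtain ⟨b', hb', hlt⟩ := exists_basis_readsCount_lt hV hb hij hqi hqj
    exact ih _ (hn ▸ hlt) b' hb' rfl
  push Not at hstep
  -- a point reading all powers of one basis element now reads all powers of every one of them
  have hclosed : ∀ g ∈ Set.range b, ∀ q ∈ {q | ReadsPowers V (b i₀).toWord q},
      g • q ∈ {q | ReadsPowers V (b i₀).toWord q} := by
    rintro _ ⟨j, rfl⟩ q hq
    have hjq : ReadsPowers V (b j).toWord q := by
      rcases eq_or_ne i₀ j with rfl | h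
      exacts [hq, hstep i₀ j h q hq.reads]
    have hjq' := hjq.smul
    rw [mk_toWord] at hjq'
    rcases eq_or_ne j i₀ with rfl | h
    exacts [hjq', hstep j i₀ h _ hjq'.reads]
  have hfin : {q | ReadsPowers V (b i₀).toWord q}.Finite := hV.subset fun q hq => hq.reads.mem
  have huniv := hfin.eq_univ_of_forall_smul_mem b.closure_range_eq_top ⟨q₀, hq₀⟩ hclosed
  exact (Set.infinite_univ (huniv ▸ hfin)).elim

end Descent

section Conjugates

variable {α : Type*} [DecidableEq α] {H : Subgroup (FreeGroup α)}

theorem exists_readsPowers_of_isConj_pow {h y : FreeGroup α} (hh : h ∈ H)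
    (hy : IsPositive y.toWord) {n : ℕ} (hn : n ≠ 0) (hconj : IsConj h (y ^ n)) :
    ∃ q, ReadsPowers (stallingsCore H) y.toWord q := by
  obtain ⟨q, hq⟩ := exists_readsPowers_reduceCyclically hh
  have hyn := (hy.flatten_replicate n).isCyclicallyReduced
  have hrot := isRotated_reduceCyclically_of_isConj hconj
  rw [toWord_pow, hyn.isReduced.reduce_eq, hyn.reduceCyclically_eq] at hrot
  obtain ⟨q', hq'⟩ := hq.exists_of_isRotated hrot.symm
  exact ⟨q', hq'.of_flatten_replicate hn⟩

theorem map_conj_inf_zpowers_eq_bot {y : FreeGroup α} (hy : IsPositive y.toWord)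
    (hread : ∀ q, ¬ ReadsPowers (stallingsCore H) y.toWord q) (g : FreeGroup α) :
    H.map (MulAut.conj g).toMonoidHom ⊓ Subgroup.zpowers y = ⊥ := by
  refine (Subgroup.eq_bot_iff_forall _).2 ?_
  rintro _ ⟨⟨h, hh, rfl⟩, m, hm⟩
  simp only [MulEquiv.coe_toMonoidHom, MulAut.conj_apply] at hm ⊢
  by_contra hne
  have hm0 : m.natAbs ≠ 0 := by
    rintro h0
    rw [Int.natAbs_eq_zero.1 h0, zpow_zero] at hm
    exact hne hm.symm
  obtain ⟨h', hh', hconj⟩ : ∃ h' ∈ H, IsConj h' (y ^ m.natAbs) := by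
    rcases Int.natAbs_eq m with hm' | hm'
    · exact ⟨h, hh, isConj_iff.2 ⟨g, by rw [← zpow_natCast, ← hm', hm]⟩⟩
    · refine ⟨h⁻¹, inv_mem hh, isConj_iff.2 ⟨g, ?_⟩⟩
      rw [← zpow_natCast, ← neg_neg (m.natAbs : ℤ), ← hm', zpow_neg, hm]
      group
  obtain ⟨q, hq⟩ := exists_readsPowers_of_isConj_pow hh' hy hm0 hconj
  exact hread q hq

theorem exists_basis_map_conj_inf_zpowers_eq_bot [Fintype α] (hH : H.FG) (hinf : H.index = 0) :
    ∃ b : FreeGroupBasis α (FreeGroup α), ∀ g i,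
      H.map (MulAut.conj g).toMonoidHom ⊓ Subgroup.zpowers (b i) = ⊥ := by
  have := Subgroup.index_eq_zero_iff_infinite.1 hinf
  obtain ⟨b, hb, hread⟩ := exists_basis_forall_not_readsPowers (stallingsCore_finite hH)
    (FreeGroupBasis.ofFreeGroup α) fun i => by simp [IsPositive]
  exact ⟨b, fun g i => map_conj_inf_zpowers_eq_bot (hb i) (hread i) g⟩

end Conjugates

end FreeGroup

theorem exists_basis_conjugates_avoid_cyclic_general {Γ : Type*} [Group Γ] (n : ℕ)
    (b : FreeGroupBasis (Fin n) Γ) (H : Subgroup Γ) (hfg : H.FG) (hinf : H.index = 0) :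
    ∃ x : FreeGroupBasis (Fin n) Γ, ∀ (g : Γ) (i : Fin n),
      Subgroup.map (MulAut.conj g).toMonoidHom H ⊓ Subgroup.zpowers (x i) = ⊥ := by
  set e := b.repr
  have hfg' : (H.map e.toMonoidHom).FG := by
    obtain ⟨T, rfl⟩ := hfg
    exact ⟨T.image e, by rw [Finset.coe_image, MonoidHom.map_closure]; rfl⟩
  obtain ⟨x, hx⟩ := FreeGroup.exists_basis_map_conj_inf_zpowers_eq_bot hfg'
    (by rw [Subgroup.index_map_of_bijective e.bijective, hinf])
  refine ⟨x.map e.symm, fun g i => ?_⟩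
  rw [← Subgroup.map_eq_bot_iff_of_injective (f := e.toMonoidHom) _ e.injective,
    Subgroup.map_inf_eq _ _ _ e.injective, MonoidHom.map_zpowers, Subgroup.map_map]
  convert hx (e g) i using 2
  · rw [Subgroup.map_map]
    congr 1
    ext
    simp
  · simp

/-- **Existence of a good basis.** Let `Γ` be a free group of finite rank `n ≥ 2`
and `H < Γ` a subgroup of finite rank and infinite index. Then there is a basis
`{x₁,…,xₙ}` of `Γ` such that for all `g ∈ Γ` and all `i`, `gHg⁻¹ ∩ ⟨xᵢ⟩ = {1}`. -/
theorem exists_basis_conjugates_avoid_cyclic {Γ : Type*} [Group Γ] (n : ℕ) (hn : 2 ≤ n)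
    (b : FreeGroupBasis (Fin n) Γ) (H : Subgroup Γ) (hfg : H.FG) (hinf : H.index = 0) :
    ∃ x : FreeGroupBasis (Fin n) Γ, ∀ (g : Γ) (i : Fin n),
      Subgroup.map (MulAut.conj g).toMonoidHom H ⊓ Subgroup.zpowers (x i) = ⊥ :=
  exists_basis_conjugates_avoid_cyclic_general n b H hfg hinf
end

section
/- Let Γ be a group and H a subgroup. The inclusion of relative bounded 2-cochains into absolute bounded 2-cochains induces a map i_b : H²_b(Γ,H;ℝ) → H²_b(Γ;ℝ) which is injective and norm non-increasing with respect to the induced seminorms. -/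
/-- The inhomogeneous coboundary of a 1-cochain: `d¹b(g,h) = b(g) + b(h) − b(gh)`. -/
def d1 {Γ : Type*} [Group Γ] (b : Γ → ℝ) : Γ → Γ → ℝ :=
  fun g h => b g + b h - b (g * h)

/-- The sup norm of a 2-cochain. -/
noncomputable def supNorm2 {Γ : Type*} (z : Γ → Γ → ℝ) : ℝ :=
  ⨆ p : Γ × Γ, |z p.1 p.2|

/-!
If a relative cocycle `z` is the coboundary `d¹b` of a bounded absolute cochain `b`, then,
as `z` vanishes on `H × H`, the restriction of `b` to `H` is a bounded homomorphism `H → ℝ`.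
Its values on powers grow linearly, so it is zero (this is `H¹_b(H;ℝ) = 0`), and `b` itself
is a relative cochain. The norm inequality holds because every relative coboundary is an
absolute one, so the absolute infimum is taken over a larger set of nonnegative numbers.
-/

lemma eq_zero_of_map_mul_of_abs_le {M : Type*} [Monoid M] {f : M → ℝ}
    (hf : ∀ x y, f (x * y) = f x + f y) {C : ℝ} (hC : ∀ x, |f x| ≤ C) (x : M) :
    f x = 0 := by
  have hf_one : f 1 = 0 := by simpa using hf 1 1
  have hf_pow : ∀ n : ℕ, f (x ^ n) = n • f x := by
    intro n
    induction n with
    | zero => simpa using hf_one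
    | succ n ih => rw [pow_succ, hf, ih, succ_nsmul]
  by_contra hx
  obtain ⟨n, hn⟩ := exists_lt_nsmul (abs_pos.mpr hx) C
  have := hC (x ^ n)
  rw [hf_pow, abs_nsmul] at this
  linarith

lemma supNorm2_nonneg {Γ : Type*} (z : Γ → Γ → ℝ) : 0 ≤ supNorm2 z :=
  Real.iSup_nonneg fun _ => abs_nonneg _

theorem relative_to_absolute_injective_norm_nonincreasing_general {Γ : Type*} [Group Γ]
    (H : Subgroup Γ) (z : Γ → Γ → ℝ)
    (hvan : ∀ h₁ ∈ H, ∀ h₂ ∈ H, z h₁ h₂ = 0) :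
    -- injectivity of `i_b`
    ((∃ b : Γ → ℝ, (∃ C : ℝ, ∀ g : Γ, |b g| ≤ C) ∧ z = d1 b) →
      ∃ b : Γ → ℝ, (∃ C : ℝ, ∀ g : Γ, |b g| ≤ C) ∧ (∀ h ∈ H, b h = 0) ∧ z = d1 b) ∧
    -- `i_b` is norm non-increasing
    sInf {r : ℝ | ∃ b : Γ → ℝ, (∃ C : ℝ, ∀ g : Γ, |b g| ≤ C) ∧
        r = supNorm2 (fun g h => z g h - d1 b g h)} ≤
      sInf {r : ℝ | ∃ b : Γ → ℝ, (∃ C : ℝ, ∀ g : Γ, |b g| ≤ C) ∧ (∀ h ∈ H, b h = 0) ∧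
        r = supNorm2 (fun g h => z g h - d1 b g h)} := by
  refine ⟨?_, ?_⟩
  · rintro ⟨b, ⟨C, hC⟩, rfl⟩
    have hb_mul : ∀ x y : H, b ↑(x * y) = b x + b y := fun x y => by
      have := hvan x x.2 y y.2
      simp only [d1] at this
      push_cast
      linarith
    exact ⟨b, ⟨C, hC⟩, fun h hh =>
      eq_zero_of_map_mul_of_abs_le (f := fun x : H => b x) hb_mul (fun x => hC x) ⟨h, hh⟩, rfl⟩
  · apply csInf_le_csInf
    · exact ⟨0, by rintro r ⟨b, -, rfl⟩; exact supNorm2_nonneg _⟩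
    · exact ⟨_, 0, ⟨0, by simp⟩, fun _ _ => rfl, rfl⟩
    · rintro r ⟨b, hb, -, hr⟩
      exact ⟨b, hb, hr⟩

/-- **The map `i_b : H²_b(Γ,H;ℝ) → H²_b(Γ;ℝ)` is an injective, norm non-increasing
embedding**, stated at the level of cochains: a relative bounded 2-cocycle `z`
(bounded, vanishing on `H × H`, satisfying the cocycle identity) which is the
coboundary of a bounded absolute 1-cochain is already the coboundary of a bounded
1-cochain vanishing on `H` (injectivity); and the seminorm of its absolute class is
at most the seminorm of its relative class (norm non-increasing). -/
theorem relative_to_absolute_injective_norm_nonincreasing {Γ : Type*} [Group Γ]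
    (H : Subgroup Γ) (z : Γ → Γ → ℝ)
    (hbdd : ∃ C : ℝ, ∀ g h : Γ, |z g h| ≤ C)
    (hvan : ∀ h₁ ∈ H, ∀ h₂ ∈ H, z h₁ h₂ = 0)
    (hcoc : ∀ g h k : Γ, z h k - z (g * h) k + z g (h * k) - z g h = 0) :
    -- injectivity of `i_b`
    ((∃ b : Γ → ℝ, (∃ C : ℝ, ∀ g : Γ, |b g| ≤ C) ∧ z = d1 b) →
      ∃ b : Γ → ℝ, (∃ C : ℝ, ∀ g : Γ, |b g| ≤ C) ∧ (∀ h ∈ H, b h = 0) ∧ z = d1 b) ∧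
    -- `i_b` is norm non-increasing
    sInf {r : ℝ | ∃ b : Γ → ℝ, (∃ C : ℝ, ∀ g : Γ, |b g| ≤ C) ∧
        r = supNorm2 (fun g h => z g h - d1 b g h)} ≤
      sInf {r : ℝ | ∃ b : Γ → ℝ, (∃ C : ℝ, ∀ g : Γ, |b g| ≤ C) ∧ (∀ h ∈ H, b h = 0) ∧
        r = supNorm2 (fun g h => z g h - d1 b g h)} :=
  relative_to_absolute_injective_norm_nonincreasing_general H z hvan
end

section
/- Let Γ be a group and H a finite-index subgroup. Then the relative second bounded cohomology H²_b(Γ,H;ℝ) vanishes. -/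
/-!
A relative bounded cocycle `z` is realised in the central extension `E` of `Γ` by `ℝ` that it
defines. Since `z` vanishes on `H × H`, the fibre coordinate is a homomorphism on the preimage
of `H`, and its transfer `φ : E → ℝ` satisfies `φ(t) = n t` on the central `ℝ`, where
`n = [Γ : H]`. Hence `b(g) = φ(g, 0) / n` has coboundary `z`, and `b` is bounded because the
transfer, computed on a transversal of the form `{(s, 0)}`, is a sum of `n` values of `z`.
Finally `b` is a bounded homomorphism on `H`, hence zero there.
-/

lemma eq_zero_of_map_mul_of_bounded {M : Type*} [Monoid M] {f : M → ℝ}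
    (hmul : ∀ x y, f (x * y) = f x + f y) {C : ℝ} (hC : ∀ x, |f x| ≤ C) (x : M) :
    f x = 0 := by
  have hpow : ∀ n : ℕ, f (x ^ n) = n * f x := by
    intro n
    induction n with
    | zero => simpa using hmul 1 1
    | succ n ih => rw [pow_succ, hmul, ih]; push_cast; ring
  by_contra hx
  have hpos : 0 < |f x| := abs_pos.mpr hx
  obtain ⟨n, hn⟩ := exists_nat_gt (C / |f x|)
  have := hC (x ^ n)
  rw [hpow, abs_mul, Nat.abs_cast] at this
  linarith [(div_lt_iff₀ hpos).mp hn]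

section

variable {Γ : Type*} [Group Γ]

class IsNormalizedCocycle (z : Γ → Γ → ℝ) : Prop where
  cocycle : ∀ g h k : Γ, z h k - z (g * h) k + z g (h * k) - z g h = 0
  map_one_left : ∀ g : Γ, z 1 g = 0
  map_one_right : ∀ g : Γ, z g 1 = 0

lemma IsNormalizedCocycle.of_map_one_one {z : Γ → Γ → ℝ}
    (hcoc : ∀ g h k : Γ, z h k - z (g * h) k + z g (h * k) - z g h = 0) (h11 : z 1 1 = 0) :
    IsNormalizedCocycle z where
  cocycle := hcoc
  map_one_left g := by
    have h := hcoc 1 1 g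
    rw [one_mul, one_mul, h11] at h
    linarith
  map_one_right g := by
    have h := hcoc g 1 1
    rw [mul_one, mul_one, h11] at h
    linarith

lemma IsNormalizedCocycle.map_inv_self {z : Γ → Γ → ℝ} [IsNormalizedCocycle z] (g : Γ) :
    z g⁻¹ g = z g g⁻¹ := by
  have h := IsNormalizedCocycle.cocycle (z := z) g g⁻¹ g
  rw [mul_inv_cancel, inv_mul_cancel, IsNormalizedCocycle.map_one_left (z := z),
    IsNormalizedCocycle.map_one_right (z := z)] at h
  linarith

@[ext]
structure CocycleExtension (z : Γ → Γ → ℝ) where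
  base : Γ
  fiber : ℝ

namespace CocycleExtension

variable {z : Γ → Γ → ℝ}

instance : One (CocycleExtension z) := ⟨⟨1, 0⟩⟩
instance : Mul (CocycleExtension z) :=
  ⟨fun a b => ⟨a.base * b.base, a.fiber + b.fiber + z a.base b.base⟩⟩
instance : Inv (CocycleExtension z) :=
  ⟨fun a => ⟨a.base⁻¹, -a.fiber - z a.base a.base⁻¹⟩⟩

@[simp] lemma base_one : (1 : CocycleExtension z).base = 1 := rfl
@[simp] lemma fiber_one : (1 : CocycleExtension z).fiber = 0 := rfl
@[simp] lemma base_mul (a b : CocycleExtension z) : (a * b).base = a.base * b.base := rfl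
@[simp] lemma fiber_mul (a b : CocycleExtension z) :
    (a * b).fiber = a.fiber + b.fiber + z a.base b.base := rfl
@[simp] lemma base_inv (a : CocycleExtension z) : a⁻¹.base = a.base⁻¹ := rfl
@[simp] lemma fiber_inv (a : CocycleExtension z) :
    a⁻¹.fiber = -a.fiber - z a.base a.base⁻¹ := rfl

def sec (z : Γ → Γ → ℝ) (g : Γ) : CocycleExtension z := ⟨g, 0⟩

def central (z : Γ → Γ → ℝ) (t : ℝ) : CocycleExtension z := ⟨1, t⟩

lemma abs_fiber_inv_sec_mul_sec_mul_sec_le {C : ℝ} (hC : ∀ g h, |z g h| ≤ C) (a b c : Γ) :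
    |((sec z a)⁻¹ * (sec z b * sec z c)).fiber| ≤ 3 * C := by
  have hfiber :
      ((sec z a)⁻¹ * (sec z b * sec z c)).fiber = -z a a⁻¹ + z b c + z a⁻¹ (b * c) := by
    simp [sec]
  rw [hfiber]
  calc |-z a a⁻¹ + z b c + z a⁻¹ (b * c)|
      ≤ |-z a a⁻¹| + |z b c| + |z a⁻¹ (b * c)| := abs_add_three _ _ _
    _ ≤ 3 * C := by rw [abs_neg]; linarith [hC a a⁻¹, hC b c, hC a⁻¹ (b * c)]

instance [IsNormalizedCocycle z] : Group (CocycleExtension z) :=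
  Group.ofLeftAxioms
    (fun a b c => by
      ext
      · exact mul_assoc a.base b.base c.base
      · simp only [fiber_mul, base_mul]
        linarith [IsNormalizedCocycle.cocycle (z := z) a.base b.base c.base])
    (fun a => by ext <;> simp [IsNormalizedCocycle.map_one_left])
    (fun a => by
      ext
      · exact inv_mul_cancel a.base
      · simp only [fiber_mul, fiber_inv, base_inv, fiber_one,
          IsNormalizedCocycle.map_inv_self a.base]
        ring)

variable [IsNormalizedCocycle z]

def proj : CocycleExtension z →* Γ := MonoidHom.mk' base fun _ _ => rfl

lemma proj_surjective : Function.Surjective (proj (z := z)) := fun g => ⟨⟨g, 0⟩, rfl⟩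

lemma central_mul_comm (t : ℝ) (a : CocycleExtension z) :
    central z t * a = a * central z t := by
  ext <;> simp [central, IsNormalizedCocycle.map_one_left, IsNormalizedCocycle.map_one_right]
  ring

lemma central_pow (t : ℝ) (n : ℕ) : central z t ^ n = central z (n * t) := by
  induction n with
  | zero => ext <;> simp [central]
  | succ n ih =>
    rw [pow_succ, ih]
    ext <;> simp [central, IsNormalizedCocycle.map_one_left]
    ring

lemma sec_mul_sec (g h : Γ) : sec z g * sec z h = sec z (g * h) * central z (z g h) := by
  ext <;> simp [sec, central, IsNormalizedCocycle.map_one_right]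

section Transfer

variable (z) (H : Subgroup Γ)

def preimage : Subgroup (CocycleExtension z) := H.comap proj

lemma index_preimage : (preimage z H).index = H.index :=
  Subgroup.index_comap_of_surjective H proj_surjective

instance [H.FiniteIndex] : (preimage z H).FiniteIndex :=
  ⟨by rw [index_preimage]; exact Subgroup.FiniteIndex.index_ne_zero⟩

variable {z H}

lemma coe_sec_base_out (q : CocycleExtension z ⧸ preimage z H) :
    (sec z q.out.base : CocycleExtension z ⧸ preimage z H) = q := by
  conv_rhs => rw [← q.out_eq']
  rw [QuotientGroup.eq]
  change (q.out.base)⁻¹ * q.out.base ∈ H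
  rw [inv_mul_cancel]
  exact H.one_mem

def fiberHom (hvan : ∀ h₁ ∈ H, ∀ h₂ ∈ H, z h₁ h₂ = 0) :
    preimage z H →* Multiplicative ℝ :=
  MonoidHom.mk' (fun a => Multiplicative.ofAdd a.1.fiber) fun a b => by
    rw [← ofAdd_add]
    congr 1
    change _ + _ + z a.1.base b.1.base = _
    rw [show z a.1.base b.1.base = 0 from hvan _ a.2 _ b.2, add_zero]

variable (hvan : ∀ h₁ ∈ H, ∀ h₂ ∈ H, z h₁ h₂ = 0) [H.FiniteIndex]

lemma transfer_central (t : ℝ) :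
    (fiberHom hvan).transfer (central z t) = Multiplicative.ofAdd (H.index * t) := by
  have hconj : ∀ (k : ℕ) (a : CocycleExtension z),
      a⁻¹ * central z t ^ k * a ∈ preimage z H →
        a⁻¹ * central z t ^ k * a = central z t ^ k := by
    intro k a _
    rw [mul_assoc, central_pow, central_mul_comm, inv_mul_cancel_left]
  rw [MonoidHom.transfer_eq_pow _ _ hconj]
  change Multiplicative.ofAdd (central z t ^ (preimage z H).index).fiber = _
  rw [central_pow, index_preimage]
  rfl

/-- The transfer is computed on a transversal inside the image of `sec`, so each of its `[Γ : H]`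
factors is a fibre coordinate of `(sec a)⁻¹ * sec g * sec c`. -/
lemma abs_toAdd_transfer_sec_le {C : ℝ} (hC : ∀ g h, |z g h| ≤ C) (g : Γ) :
    |Multiplicative.toAdd ((fiberHom hvan).transfer (sec z g))| ≤ H.index * (3 * C) := by
  classical
  let := (preimage z H).fintypeQuotientOfFiniteIndex
  let T : (preimage z H).LeftTransversal :=
    ⟨Set.range fun q => sec z q.out.base, Subgroup.isComplement_range_left coe_sec_base_out⟩
  rw [MonoidHom.transfer_def _ T, Subgroup.leftTransversals.diff, toAdd_prod]
  refine (Finset.abs_sum_le_sum_abs _ _).trans ?_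
  refine (Finset.sum_le_card_nsmul _ _ (3 * C) fun q _ => ?_).trans ?_
  · obtain ⟨q₁, hq₁⟩ := (T.2.leftQuotientEquiv q).2
    obtain ⟨_, ⟨q₂, rfl⟩, hq₂⟩ := ((sec z g • T).2.leftQuotientEquiv q).2
    change |((T.2.leftQuotientEquiv q : CocycleExtension z)⁻¹ *
      ((sec z g • T).2.leftQuotientEquiv q : CocycleExtension z)).fiber| ≤ 3 * C
    rw [← hq₁, ← hq₂]
    exact abs_fiber_inv_sec_mul_sec_mul_sec_le hC _ _ _
  · rw [Finset.card_univ, ← Nat.card_eq_fintype_card, ← Subgroup.index_eq_card, index_preimage,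
      nsmul_eq_mul]

end Transfer

end CocycleExtension

open CocycleExtension in
theorem exists_bounded_eq_d1_of_finiteIndex (H : Subgroup Γ) [H.FiniteIndex]
    {z : Γ → Γ → ℝ} [IsNormalizedCocycle z] {C : ℝ} (hC : ∀ g h, |z g h| ≤ C)
    (hvan : ∀ h₁ ∈ H, ∀ h₂ ∈ H, z h₁ h₂ = 0) :
    ∃ b : Γ → ℝ, (∀ g, |b g| ≤ 3 * C) ∧ z = d1 b := by
  have hn : (0 : ℝ) < H.index :=
    Nat.cast_pos.mpr (Nat.pos_of_ne_zero Subgroup.FiniteIndex.index_ne_zero)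
  set φ := (fiberHom hvan).transfer
  have hφ : ∀ g h, (φ (sec z g)).toAdd + (φ (sec z h)).toAdd
      = (φ (sec z (g * h))).toAdd + H.index * z g h := by
    intro g h
    rw [← toAdd_mul, ← map_mul, sec_mul_sec, map_mul, transfer_central, toAdd_mul,
      toAdd_ofAdd]
  refine ⟨fun g => (φ (sec z g)).toAdd / H.index, fun g => ?_, ?_⟩
  · rw [abs_div, abs_of_pos hn, div_le_iff₀ hn, mul_comm]
    exact abs_toAdd_transfer_sec_le hvan hC g
  · funext g h
    simp only [d1]
    field_simp
    linarith [hφ g h]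

end

/-- **Vanishing of relative second bounded cohomology for finite-index subgroups.**
If `H` has finite index in `Γ` then `H²_b(Γ,H;ℝ) = 0`: every relative bounded
2-cocycle (bounded, vanishing on `H × H`, satisfying the cocycle identity) is the
coboundary of a bounded 1-cochain vanishing on `H`. -/
theorem relative_H2b_vanishes_of_finiteIndex {Γ : Type*} [Group Γ] (H : Subgroup Γ)
    (hfin : H.index ≠ 0) :
    ∀ z : Γ → Γ → ℝ,
      (∃ C : ℝ, ∀ g h : Γ, |z g h| ≤ C) →
      (∀ h₁ ∈ H, ∀ h₂ ∈ H, z h₁ h₂ = 0) →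
      (∀ g h k : Γ, z h k - z (g * h) k + z g (h * k) - z g h = 0) →
      ∃ b : Γ → ℝ, (∃ C : ℝ, ∀ g : Γ, |b g| ≤ C) ∧ (∀ h ∈ H, b h = 0) ∧ z = d1 b := by
  intro z ⟨C, hC⟩ hvan hcoc
  have : H.FiniteIndex := ⟨hfin⟩
  have : IsNormalizedCocycle z := .of_map_one_one hcoc (hvan 1 H.one_mem 1 H.one_mem)
  obtain ⟨b, hb, rfl⟩ := exists_bounded_eq_d1_of_finiteIndex H hC hvan
  refine ⟨b, ⟨3 * C, hb⟩, fun h hh => ?_, rfl⟩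
  have hmul : ∀ x y : H, b (x * y : H) = b x + b y := fun x y => by
    have := hvan x x.2 y y.2
    simp only [d1] at this
    push_cast
    linarith
  exact eq_zero_of_map_mul_of_bounded (f := fun x : H => b x) hmul
    (fun x => hb x) ⟨h, hh⟩
end

section
/- Let Γ be a group and H a subgroup. The sequence 0 → QM₀(Γ,H) → QM(Γ,H) → H²_b(Γ,H;ℝ) → H²(Γ,H;ℝ) is exact, where the middle map sends f to the class of d¹f and the last map is the comparison map. In particular, the kernel of the relative comparison map H²_b(Γ,H;ℝ) → H²(Γ,H;ℝ) is canonically isomorphic to QM(Γ,H)/(C¹_b(Γ,H) ⊕ Hom(Γ,H;ℝ)). -/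
section Coboundary

variable {Γ : Type*} [Group Γ]

theorem d1_add (f α : Γ → ℝ) : d1 (f + α) = d1 f + d1 α := by
  funext g h
  simp only [d1, Pi.add_apply]
  ring

theorem d1_sub (f α : Γ → ℝ) : d1 (f - α) = d1 f - d1 α := by
  funext g h
  simp only [d1, Pi.sub_apply]
  ring

theorem d1_eq_zero_iff (ρ : Γ → ℝ) : d1 ρ = 0 ↔ ∀ g h : Γ, ρ (g * h) = ρ g + ρ h := by
  simp only [funext_iff, d1, Pi.zero_apply]
  exact forall₂_congr fun g h => by constructor <;> intro e <;> linarith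

theorem d1_eq_d1_iff (f α : Γ → ℝ) :
    d1 f = d1 α ↔ ∀ g h : Γ, (f - α) (g * h) = (f - α) g + (f - α) h := by
  rw [← sub_eq_zero, ← d1_sub, d1_eq_zero_iff]

theorem abs_d1_apply (f : Γ → ℝ) (g h : Γ) : |d1 f g h| = |f (g * h) - f g - f h| := by
  rw [← abs_neg]
  congr 1
  simp only [d1]
  ring

end Coboundary

/-- **Exactness of `0 → QM₀(Γ,H) → QM(Γ,H) → H²_b(Γ,H;ℝ) → H²(Γ,H;ℝ)`**, stated at
the level of cochains.  Exactness at `QM(Γ,H)`: a quasimorphism `f` vanishing on `H`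
maps to the zero relative bounded class iff `f ∈ QM₀(Γ,H) = C¹_b(Γ,H) ⊕ Hom(Γ,H;ℝ)`.
Exactness at `H²_b(Γ,H;ℝ)`: a relative bounded 2-cocycle `z` is killed by the
comparison map (i.e. it is the coboundary of some relative 1-cochain) iff its class
comes from a relative quasimorphism (i.e. `z` differs from the coboundary of some
`f ∈ QM(Γ,H)` by a relative bounded coboundary).  In particular the kernel of the
relative comparison map is `QM(Γ,H)/(C¹_b(Γ,H) ⊕ Hom(Γ,H;ℝ))`. -/
theorem exact_sequence_relative_quasimorphisms {Γ : Type*} [Group Γ] (H : Subgroup Γ) :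
    -- exactness at QM(Γ,H)
    (∀ f : Γ → ℝ, (∃ C : ℝ, ∀ g h : Γ, |f (g * h) - f g - f h| ≤ C) → (∀ h ∈ H, f h = 0) →
      ((∃ α : Γ → ℝ, (∃ C : ℝ, ∀ g : Γ, |α g| ≤ C) ∧ (∀ h ∈ H, α h = 0) ∧ d1 f = d1 α) ↔
        (∃ α ρ : Γ → ℝ, (∃ C : ℝ, ∀ g : Γ, |α g| ≤ C) ∧ (∀ h ∈ H, α h = 0) ∧
          (∀ g h : Γ, ρ (g * h) = ρ g + ρ h) ∧ (∀ h ∈ H, ρ h = 0) ∧ f = α + ρ))) ∧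
    -- exactness at H²_b(Γ,H;ℝ)
    (∀ z : Γ → Γ → ℝ, (∃ C : ℝ, ∀ g h : Γ, |z g h| ≤ C) →
      (∀ h₁ ∈ H, ∀ h₂ ∈ H, z h₁ h₂ = 0) →
      (∀ g h k : Γ, z h k - z (g * h) k + z g (h * k) - z g h = 0) →
      ((∃ ξ : Γ → ℝ, (∀ h ∈ H, ξ h = 0) ∧ z = d1 ξ) ↔
        (∃ f α : Γ → ℝ, (∃ C : ℝ, ∀ g h : Γ, |f (g * h) - f g - f h| ≤ C) ∧
          (∀ h ∈ H, f h = 0) ∧ (∃ C : ℝ, ∀ g : Γ, |α g| ≤ C) ∧ (∀ h ∈ H, α h = 0) ∧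
          z = d1 (f + α)))) := by
  refine ⟨fun f _ hf => ⟨?_, ?_⟩, fun z hz _ _ => ⟨?_, ?_⟩⟩
  · rintro ⟨α, hα, hαH, hd⟩
    refine ⟨α, f - α, hα, hαH, (d1_eq_d1_iff f α).1 hd, fun h hh => ?_, (add_sub_cancel α f).symm⟩
    simp [hf h hh, hαH h hh]
  · rintro ⟨α, ρ, hα, hαH, hρ, -, rfl⟩
    exact ⟨α, hα, hαH, by rw [d1_add, (d1_eq_zero_iff ρ).2 hρ, add_zero]⟩
  · rintro ⟨ξ, hξH, rfl⟩
    obtain ⟨C, hC⟩ := hz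
    refine ⟨ξ, 0, ⟨C, fun g h => abs_d1_apply ξ g h ▸ hC g h⟩, hξH, ⟨0, by simp⟩, by simp,
      by rw [add_zero]⟩
  · rintro ⟨f, α, -, hfH, -, hαH, rfl⟩
    exact ⟨f + α, fun h hh => by simp [hfH h hh, hαH h hh], rfl⟩
end
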